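/- (Unique decoding with poles.) Let t ≤ ⌊(L − d_f − d_g + 1)/2⌋. Let R = (ϑ_j, r_j)_{1≤j≤n} be a reduced received word (gcd((x−α_j)^{ϑ_j}, r_j) = 1 for all j) and suppose there is a reduced f/g with deg f_i < d_f, deg g < d_g such that the error locator Λ between Ev^∞(f/g) and R satisfies deg Λ ≤ t. Then every solution (φ, ψ_1,…,ψ_ℓ) of the key equations CRT_M((x−α_j)^{ϑ_j})·ψ_i ≡ φ·R_i mod M with deg φ < d_g + t and deg ψ_i < d_f + t lies in (Λg, Λf_1,…,Λf_ℓ)·F_q[x]. -/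

import Mathlib

open Polynomial

/-!
Modulo `(x - α_j)^{λ_j}` the key equations read `(x - α_j)^{ϑ_j} ψ_i ≡ φ r_{ij}`. Comparing them
with the errors `e_{ij} = (x - α_j)^{ϑ_j} f_i - g r_{ij}`, which vanish to order `μ_j` at `α_j`,
shows that the cross difference `ψ_i g - φ f_i` vanishes to order `μ_j` at every `α_j`. As
`∑ μ_j ≥ L - t` exceeds its degree, `ψ_i g = φ f_i`, hence `(φ, ψ) = p (g, f)` since `f/g` is
reduced. Substituting back gives `(x - α_j)^{λ_j} ∣ p e_{ij}` for all `i`; some `e_{ij}` has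
valuation exactly `μ_j` when `μ_j < λ_j`, so `(x - α_j)^{λ_j - μ_j} ∣ p` for every `j`: `Λ ∣ p`.
-/

theorem dvd_mul_sub_mul_of_dvd_sub {R : Type*} [CommRing R] {m T T' S S' ψ φ : R}
    (h : m ∣ T * ψ - φ * S) (hT : m ∣ T - T') (hS : m ∣ S - S') : m ∣ T' * ψ - φ * S' := by
  convert dvd_add (dvd_sub h (hT.mul_right ψ)) (hS.mul_right φ) using 1
  ring

theorem Prime.pow_dvd_of_dvd_sub_mul {R : Type*} [CommRing R] [IsDomain R] {p s g r : R}
    (hp : Prime p) {k : ℕ} (hs : p ^ k ∣ s) (h : p ^ k ∣ s - g * r) (hr : ¬ p ∣ r) : p ^ k ∣ g :=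
  hp.pow_dvd_of_dvd_mul_right k hr (by simpa using dvd_sub hs h)

theorem pow_dvd_mul_sub_mul {R : Type*} [CommRing R] [IsDomain R] {q g φ ψ f r : R}
    {v lam ϑ μ : ℕ} (hq : q ≠ 0) (hg : q ^ v ∣ g) (hφ : q ^ ϑ ∣ φ)
    (hcol : q ^ lam ∣ q ^ ϑ * ψ - φ * r) (he : q ^ μ ∣ q ^ ϑ * f - g * r)
    (hle : ϑ + μ ≤ v + lam) : q ^ μ ∣ ψ * g - φ * f := by
  have key : q ^ ϑ * (ψ * g - φ * f) = g * (q ^ ϑ * ψ - φ * r) - φ * (q ^ ϑ * f - g * r) := by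
    ring
  rw [← mul_dvd_mul_iff_left (pow_ne_zero ϑ hq), ← pow_add, key]
  refine dvd_sub ((pow_dvd_pow q hle).trans ?_) (pow_add q ϑ μ ▸ mul_dvd_mul hφ he)
  rw [pow_add]
  exact mul_dvd_mul hg hcol

theorem dvd_of_forall_dvd_mul_of_gcd_eq_one {R ι : Type*} [CommRing R] [IsDomain R] [IsBezout R]
    [NormalizedGCDMonoid R] {s : Finset ι} {f : ι → R} {g φ : R}
    (hred : gcd (s.gcd f) g = 1) (h : ∀ i ∈ s, g ∣ φ * f i) : g ∣ φ := by
  have hg : g ∣ φ * s.gcd f :=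
    (Finset.gcd_mul_left' s f φ).dvd_iff_dvd_right.mp (Finset.dvd_gcd h)
  have hcop : IsCoprime g (s.gcd f) := ((gcd_isUnit_iff _ _).mp (hred ▸ isUnit_one)).symm
  exact hcop.dvd_of_dvd_mul_right hg

namespace Polynomial

theorem degree_mul_lt_of_lt {R : Type*} [Semiring R] {p q : R[X]} {m k : ℕ}
    (hp : p.degree < m) (hq : q.degree < k) : (p * q).degree < (m + k - 1 : ℕ) := by
  by_cases hp0 : p = 0
  · simp [hp0]
  by_cases hq0 : q = 0
  · simp [hq0]
  have hpm := (natDegree_lt_iff_degree_lt hp0).mpr hp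
  have hqk := (natDegree_lt_iff_degree_lt hq0).mpr hq
  refine (degree_mul_le p q).trans_lt ?_
  rw [degree_eq_natDegree hp0, degree_eq_natDegree hq0, ← Nat.cast_add, Nat.cast_lt]
  omega

theorem pow_sub_rootMultiplicity_dvd {R : Type*} [CommRing R] [IsDomain R] {a : R}
    {m : ℕ} {p e : R[X]} (he : e ≠ 0) (h : (X - C a) ^ m ∣ p * e) :
    (X - C a) ^ (m - rootMultiplicity a e) ∣ p := by
  by_cases hp : p = 0
  · simp [hp]
  have hpe := (le_rootMultiplicity_iff (mul_ne_zero hp he)).mpr h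
  rw [rootMultiplicity_mul (mul_ne_zero hp he)] at hpe
  exact (le_rootMultiplicity_iff hp).mp (by omega)

section TruncatedRootMultiplicity

variable {R ι : Type*} [CommRing R] [DecidableEq R] [Fintype ι] [Nonempty ι]

/-- The paper's truncated valuation `min(m, ν_a(e))` of a column `e = (e_i)_i`. -/
noncomputable def truncatedRootMultiplicity (a : R) (m : ℕ) (e : ι → R[X]) : ℕ :=
  min m (Finset.univ.inf' Finset.univ_nonempty
    fun i => if e i = 0 then m else rootMultiplicity a (e i))

variable {a : R} {m : ℕ} {e : ι → R[X]}

theorem truncatedRootMultiplicity_le : truncatedRootMultiplicity a m e ≤ m :=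
  min_le_left _ _

theorem pow_truncatedRootMultiplicity_dvd (i : ι) :
    (X - C a) ^ truncatedRootMultiplicity a m e ∣ e i := by
  by_cases hz : e i = 0
  · simp [hz]
  rw [← le_rootMultiplicity_iff hz]
  exact (min_le_right _ _).trans ((Finset.inf'_le _ (Finset.mem_univ i)).trans_eq (if_neg hz))

theorem exists_rootMultiplicity_eq_truncatedRootMultiplicity
    (hlt : truncatedRootMultiplicity a m e < m) :
    ∃ i, e i ≠ 0 ∧ rootMultiplicity a (e i) = truncatedRootMultiplicity a m e := by
  obtain ⟨i, -, hi⟩ := Finset.exists_mem_eq_inf' Finset.univ_nonempty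
    fun i => if e i = 0 then m else rootMultiplicity a (e i)
  have hinf : truncatedRootMultiplicity a m e = _ := min_eq_right_of_lt (by
    by_contra! hge
    exact hlt.ne (min_eq_left hge))
  by_cases hz : e i = 0
  · rw [hinf, hi, if_pos hz] at hlt
    exact (lt_irrefl m hlt).elim
  · exact ⟨i, hz, by rw [hinf, hi, if_neg hz]⟩

theorem pow_sub_truncatedRootMultiplicity_dvd [IsDomain R] {p : R[X]}
    (h : ∀ i, (X - C a) ^ m ∣ p * e i) :
    (X - C a) ^ (m - truncatedRootMultiplicity a m e) ∣ p := by
  by_cases hlt : truncatedRootMultiplicity a m e < m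
  · obtain ⟨i, hi, hμ⟩ := exists_rootMultiplicity_eq_truncatedRootMultiplicity hlt
    exact hμ ▸ pow_sub_rootMultiplicity_dvd hi (h i)
  · simp [Nat.sub_eq_zero_of_le (not_lt.mp hlt)]

theorem pow_truncatedRootMultiplicity_dvd_mul_sub_mul [IsDomain R] {lam ϑ : ℕ} (hϑ : ϑ ≤ lam)
    {r f ψ : ι → R[X]} {g φ : R[X]} (hg : g ≠ 0) (hreduced : 0 < ϑ → ∃ i, ¬ (X - C a) ∣ r i)
    (hcol : ∀ i, (X - C a) ^ lam ∣ (X - C a) ^ ϑ * ψ i - φ * r i) (i : ι) :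
    (X - C a) ^ truncatedRootMultiplicity a lam (fun i => (X - C a) ^ ϑ * f i - g * r i) ∣
      ψ i * g - φ * f i := by
  set μ := truncatedRootMultiplicity a lam (fun i => (X - C a) ^ ϑ * f i - g * r i)
  have hμ : μ ≤ lam := truncatedRootMultiplicity_le
  have he := pow_truncatedRootMultiplicity_dvd (a := a) (m := lam)
    (e := fun i => (X - C a) ^ ϑ * f i - g * r i)
  obtain ⟨hφ, hle⟩ : (X - C a) ^ ϑ ∣ φ ∧ ϑ + μ ≤ rootMultiplicity a g + lam := by
    rcases ϑ.eq_zero_or_pos with h0 | h0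
    · exact ⟨by simp [h0], by omega⟩
    obtain ⟨i₀, hi₀⟩ := hreduced h0
    have hprime := prime_X_sub_C a
    refine ⟨hprime.pow_dvd_of_dvd_sub_mul (dvd_mul_right _ _)
      ((pow_dvd_pow _ hϑ).trans (hcol i₀)) hi₀, ?_⟩
    -- `g r_{i₀}` vanishes to order exactly `ν_a(g)`, so the error does too unless `ν_a(g) ≥ ϑ`.
    have hg' : (X - C a) ^ min μ ϑ ∣ g :=
      hprime.pow_dvd_of_dvd_sub_mul (dvd_mul_of_dvd_left (pow_dvd_pow _ (min_le_right _ _)) _)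
        ((pow_dvd_pow _ (min_le_left _ _)).trans (he i₀)) hi₀
    have hmin : min μ ϑ ≤ rootMultiplicity a g := (le_rootMultiplicity_iff hg).mpr hg'
    omega
  exact pow_dvd_mul_sub_mul (X_sub_C_ne_zero a) (pow_rootMultiplicity_dvd g a) hφ (hcol i)
    (he i) hle

end TruncatedRootMultiplicity

section Products

variable {K ι : Type*} [Field K] [Fintype ι] {α : ι → K}

theorem natDegree_prod_X_sub_C_pow (e : ι → ℕ) :
    (∏ j, (X - C (α j)) ^ e j).natDegree = ∑ j, e j := by
  rw [natDegree_prod _ _ fun j _ => pow_ne_zero _ (X_sub_C_ne_zero _)]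
  simp

theorem prod_X_sub_C_pow_dvd (hα : Function.Injective α) {e : ι → ℕ} {p : K[X]}
    (h : ∀ j, (X - C (α j)) ^ e j ∣ p) : ∏ j, (X - C (α j)) ^ e j ∣ p :=
  Fintype.prod_dvd_of_coprime (fun _ _ hjk => (pairwise_coprime_X_sub_C hα hjk).pow) h

theorem eq_zero_of_forall_X_sub_C_pow_dvd (hα : Function.Injective α) {e : ι → ℕ} {p : K[X]}
    (h : ∀ j, (X - C (α j)) ^ e j ∣ p) (hdeg : p.degree < (∑ j, e j : ℕ)) : p = 0 := by
  have hprod : ∏ j, (X - C (α j)) ^ e j ≠ 0 :=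
    Finset.prod_ne_zero_iff.mpr fun j _ => pow_ne_zero _ (X_sub_C_ne_zero _)
  refine eq_zero_of_dvd_of_degree_lt (prod_X_sub_C_pow_dvd hα h) ?_
  rwa [degree_eq_natDegree hprod, natDegree_prod_X_sub_C_pow]

end Products

end Polynomial

theorem unique_decoding_with_poles_general {F : Type*} [Field F] [DecidableEq F]
    (n ℓ : ℕ) [NeZero ℓ]
    (α : Fin n → F) (hα : Function.Injective α)
    (lam ϑ : Fin n → ℕ) (hϑ : ∀ j, ϑ j ≤ lam j)
    (M : F[X]) (hM : M = ∏ j, (X - C (α j)) ^ lam j)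
    (L : ℕ) (hL : L = M.natDegree)
    (df dg t : ℕ)
    (ht : 2 * (t : ℤ) ≤ (L : ℤ) - df - dg + 1)
    -- the received reductions `r_{i,j}` (as lifts), reduced columns
    (r : Fin ℓ → Fin n → F[X])
    (hreduced : ∀ j, 0 < ϑ j → ∃ i, ¬ (X - C (α j)) ∣ r i j)
    -- `R i` is the CRT interpolant of row `i`
    (R : Fin ℓ → F[X]) (hR : ∀ i j, (X - C (α j)) ^ lam j ∣ (R i - r i j))
    -- `T = CRT_M((x−α_j)^{ϑ_j})`
    (T : F[X]) (hT : ∀ j, (X - C (α j)) ^ lam j ∣ (T - (X - C (α j)) ^ ϑ j))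
    (f : Fin ℓ → F[X]) (g : F[X]) (hg : g ≠ 0)
    (hdegf : ∀ i, (f i).degree < (df : ℕ)) (hdegg : g.degree < (dg : ℕ))
    (hred : gcd (Finset.univ.gcd f) g = 1)
    -- `μ j` is the truncated valuation of `ẽ_j = (x−α_j)^{ϑ_j} f − g r_j`
    (μ : Fin n → ℕ)
    (hμ : ∀ j, μ j = min (lam j) (Finset.univ.inf' Finset.univ_nonempty
        (fun i => if (X - C (α j)) ^ ϑ j * f i - g * r i j = 0 then lam j
          else rootMultiplicity (α j) ((X - C (α j)) ^ ϑ j * f i - g * r i j))))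
    (Λ : F[X]) (hΛ : Λ = ∏ j, (X - C (α j)) ^ (lam j - μ j))
    (hΛt : Λ.natDegree ≤ t) :
    ∀ (φ : F[X]) (ψ : Fin ℓ → F[X]),
      (∀ i, M ∣ (T * ψ i - φ * R i)) →
      φ.degree < (dg + t : ℕ) → (∀ i, (ψ i).degree < (df + t : ℕ)) →
      ∃ p : F[X], φ = p * (Λ * g) ∧ ∀ i, ψ i = p * (Λ * f i) := by
  intro φ ψ hkey hdegφ hdegψ
  have hcol : ∀ i j, (X - C (α j)) ^ lam j ∣ (X - C (α j)) ^ ϑ j * ψ i - φ * r i j :=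
    fun i j => dvd_mul_sub_mul_of_dvd_sub
      ((hM ▸ Finset.dvd_prod_of_mem _ (Finset.mem_univ j)).trans (hkey i)) (hT j) (hR i j)
  have hLμ : L ≤ ∑ j, μ j + t := by
    have hsplit : ∑ j, lam j ≤ ∑ j, μ j + ∑ j, (lam j - μ j) := by
      rw [← Finset.sum_add_distrib]
      exact Finset.sum_le_sum fun j _ => le_add_tsub
    rw [hΛ, natDegree_prod_X_sub_C_pow] at hΛt
    rw [hL, hM, natDegree_prod_X_sub_C_pow]
    omega
  have hcross : ∀ i, ψ i * g = φ * f i := by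
    intro i
    refine sub_eq_zero.mp (eq_zero_of_forall_X_sub_C_pow_dvd hα (e := μ) (fun j => ?_) ?_)
    · rw [hμ j]
      exact pow_truncatedRootMultiplicity_dvd_mul_sub_mul (hϑ j) hg (hreduced j) (hcol · j) i
    · refine (degree_sub_le _ _).trans_lt (max_lt ?_ ?_)
      · exact (degree_mul_lt_of_lt (hdegψ i) hdegg).trans_le (Nat.cast_le.mpr (by omega))
      · exact (degree_mul_lt_of_lt hdegφ (hdegf i)).trans_le (Nat.cast_le.mpr (by omega))
  obtain ⟨p₀, rfl⟩ : g ∣ φ :=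
    dvd_of_forall_dvd_mul_of_gcd_eq_one hred fun i _ => ⟨ψ i, by rw [← hcross i]; ring⟩
  have hψ : ∀ i, ψ i = p₀ * f i := fun i => mul_right_cancel₀ hg (by rw [hcross i]; ring)
  obtain ⟨p, rfl⟩ : Λ ∣ p₀ := by
    rw [hΛ]
    refine prod_X_sub_C_pow_dvd hα fun j =>
      hμ j ▸ pow_sub_truncatedRootMultiplicity_dvd fun i => ?_
    convert hcol i j using 1
    rw [hψ i]
    ring
  exact ⟨p, by ring, fun i => by rw [hψ i]; ring⟩

/-- Unique decoding with poles: for `t ≤ ⌊(L − d_f − d_g + 1)/2⌋`, a reduced received word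
`(ϑ_j, r_j)_j` and a reduced `f/g` whose error locator `Λ` relative to the received word has
degree `≤ t`, every solution `(φ, ψ)` of the key equations
`CRT_M((x−α_j)^{ϑ_j})·ψ_i ≡ φ·R_i (mod M)` with the degree bounds lies in
`(Λg, Λf_1,…,Λf_ℓ)·F_q[x]`. -/
theorem unique_decoding_with_poles {F : Type*} [Field F] [Fintype F] [DecidableEq F]
    (n ℓ : ℕ) [NeZero ℓ]
    (α : Fin n → F) (hα : Function.Injective α)
    (lam ϑ : Fin n → ℕ) (hlam : ∀ j, 0 < lam j) (hϑ : ∀ j, ϑ j ≤ lam j)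
    (M : F[X]) (hM : M = ∏ j, (X - C (α j)) ^ lam j)
    (L : ℕ) (hL : L = M.natDegree)
    (df dg t : ℕ) (hdf : 0 < df) (hdg : 0 < dg) (hsum : df + dg ≤ L + 1)
    (ht : 2 * (t : ℤ) ≤ (L : ℤ) - df - dg + 1)
    -- the received reductions `r_{i,j}` (as lifts), reduced columns
    (r : Fin ℓ → Fin n → F[X])
    (hreduced : ∀ j, 0 < ϑ j → ∃ i, ¬ (X - C (α j)) ∣ r i j)
    -- `R i` is the CRT interpolant of row `i`
    (R : Fin ℓ → F[X]) (hR : ∀ i j, (X - C (α j)) ^ lam j ∣ (R i - r i j))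
    -- `T = CRT_M((x−α_j)^{ϑ_j})`
    (T : F[X]) (hT : ∀ j, (X - C (α j)) ^ lam j ∣ (T - (X - C (α j)) ^ ϑ j))
    (f : Fin ℓ → F[X]) (g : F[X]) (hg : g ≠ 0)
    (hdegf : ∀ i, (f i).degree < (df : ℕ)) (hdegg : g.degree < (dg : ℕ))
    (hred : gcd (Finset.univ.gcd f) g = 1)
    -- `μ j` is the truncated valuation of `ẽ_j = (x−α_j)^{ϑ_j} f − g r_j`
    (μ : Fin n → ℕ)
    (hμ : ∀ j, μ j = min (lam j) (Finset.univ.inf' Finset.univ_nonempty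
        (fun i => if (X - C (α j)) ^ ϑ j * f i - g * r i j = 0 then lam j
          else rootMultiplicity (α j) ((X - C (α j)) ^ ϑ j * f i - g * r i j))))
    (Λ : F[X]) (hΛ : Λ = ∏ j, (X - C (α j)) ^ (lam j - μ j))
    (hΛt : Λ.natDegree ≤ t) :
    ∀ (φ : F[X]) (ψ : Fin ℓ → F[X]),
      (∀ i, M ∣ (T * ψ i - φ * R i)) →
      φ.degree < (dg + t : ℕ) → (∀ i, (ψ i).degree < (df + t : ℕ)) →
      ∃ p : F[X], φ = p * (Λ * g) ∧ ∀ i, ψ i = p * (Λ * f i) :=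
  unique_decoding_with_poles_general n ℓ α hα lam ϑ hϑ M hM L hL df dg t ht r hreduced R hR T hT f g
    hg hdegf hdegg hred μ hμ Λ hΛ hΛt
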